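/- Let Φ be a non-uniform random k-SAT formula on n variables with m clauses and maximum clause probability q_max with 2^k·q_max < 1. Then the probability that Φ is unsatisfiable is at least (1 − exp(−q_max·m))^{2^k} − q_max²·2^{2k}·m·(1 + exp(−q_max·m))^{2^k}. -/

import Mathlib

/-!
If all `2 ^ k` clauses on the variables `x₁, …, x_k`, one for each sign pattern, occur in `Φ`,
then `Φ` is unsatisfiable. Each of these clauses has probability `q_max`, so by
inclusion–exclusion this event has probability `∑ₛ (-1)ˢ (2ᵏ choose s) (1 - s q_max)ᵐ`.
Replacing `(1 - s q)ᵐ` by `((1 - q)ˢ)ᵐ ≤ e^{-sqm}` costs at most `(3/2) m s² q² e^{-sqm}` per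
term, and the binomial theorem sums both the main terms and the errors.
-/

open Finset Filter Asymptotics

open scoped Classical

/-- The probability of drawing a given ordered k-clause (a tuple of `k` literals over
pairwise distinct variables); an unordered k-clause over a variable set `J` then has total
probability `(∏_{j∈J} pⱼ) / (2^k · ∑_{|J'|=k} ∏_{j∈J'} pⱼ)`. -/
noncomputable def clauseProbK (n k : ℕ) (p : ℕ → ℝ) (c : Fin k → Fin n × Bool) : ℝ :=
  if Function.Injective fun i => (c i).1 then
    (∏ i, p ((c i).1 : ℕ)) /
      (2 ^ k * (Nat.factorial k) *
        ∑ J ∈ Finset.powersetCard k (Finset.range n), ∏ j ∈ J, p j)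
  else 0

/-- The probability of drawing a given k-CNF formula: `m` clauses drawn independently. -/
noncomputable def formulaProbK (n m k : ℕ) (p : ℕ → ℝ)
    (Φ : Fin m → Fin k → Fin n × Bool) : ℝ :=
  ∏ j, clauseProbK n k p (Φ j)

/-- Satisfiability of a k-CNF formula: a literal `(x, b)` is satisfied by `a` iff `a x = b`. -/
def SatK {n m k : ℕ} (Φ : Fin m → Fin k → Fin n × Bool) : Prop :=
  ∃ a : Fin n → Bool, ∀ j, ∃ i, a (Φ j i).1 = (Φ j i).2

/-- The probability that a non-uniform random k-SAT formula is unsatisfiable. -/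
noncomputable def probUnsatK (n m k : ℕ) (p : ℕ → ℝ) : ℝ :=
  ∑ Φ : Fin m → Fin k → Fin n × Bool,
    if ¬ SatK Φ then formulaProbK n m k p Φ else 0

/-- The maximum clause probability: for a decreasingly sorted distribution `p` this is the
probability of a clause over the `k` most probable variables,
`q_max = (∏_{j<k} pⱼ) / (2^k · ∑_{|J'|=k} ∏_{j∈J'} pⱼ)`. -/
noncomputable def qmaxK (n k : ℕ) (p : ℕ → ℝ) : ℝ :=
  (∏ j ∈ Finset.range k, p j) /
    (2 ^ k * ∑ J ∈ Finset.powersetCard k (Finset.range n), ∏ j ∈ J, p j)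

/-- `p n` is a probability vector on `n` variables (indexed `0,…,n-1`), sorted decreasingly,
with all entries positive. -/
def ProbEnsemble (p : ℕ → ℕ → ℝ) : Prop :=
  ∀ n, 1 ≤ n →
    (∑ i ∈ Finset.range n, p n i = 1) ∧
    (∀ i j, i ≤ j → j < n → p n j ≤ p n i) ∧
    (∀ i, i < n → 0 < p n i)

open Function Real

open scoped Nat

lemma one_sub_pow_le_one_sub_mul_add_sq {q : ℝ} (hq0 : 0 ≤ q) (hq1 : q ≤ 1) (s : ℕ) :
    (1 - q) ^ s ≤ 1 - s * q + s ^ 2 * q ^ 2 / 2 := by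
  induction s with
  | zero => norm_num
  | succ s ih =>
    have := mul_le_mul_of_nonneg_left ih (sub_nonneg.2 hq1)
    rw [pow_succ']
    push_cast
    nlinarith [mul_nonneg (mul_nonneg (sq_nonneg (s : ℝ)) hq0) (sq_nonneg q)]

lemma one_sub_mul_le_one_sub_pow {q : ℝ} (hq1 : q ≤ 1) (s : ℕ) : 1 - s * q ≤ (1 - q) ^ s := by
  simpa [sub_eq_add_neg] using one_add_mul_le_pow (show (-2 : ℝ) ≤ -q by linarith) s

lemma one_sub_pow_le_exp_neg_mul {q : ℝ} (hq1 : q ≤ 1) (t : ℕ) : (1 - q) ^ t ≤ exp (-(q * t)) := by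
  calc (1 - q) ^ t ≤ exp (-q) ^ t :=
        pow_le_pow_left₀ (sub_nonneg.2 hq1) (by linarith [add_one_le_exp (-q)]) t
    _ = exp (-(q * t)) := by rw [← exp_nat_mul]; ring_nf

lemma one_sub_pow_pow_sub_one_sub_mul_pow_le {q : ℝ} {s : ℕ} (hq0 : 0 ≤ q) (hsq : s * q ≤ 1)
    (m : ℕ) :
    ((1 - q) ^ s) ^ m - (1 - s * q) ^ m ≤ 3 / 2 * m * s ^ 2 * q ^ 2 * exp (-(q * m)) ^ s := by
  rcases Nat.eq_zero_or_pos s with rfl | hs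
  · simp
  have hq1 : q ≤ 1 := le_trans (le_mul_of_one_le_left hq0 (by exact_mod_cast hs)) hsq
  set a := (1 - q) ^ s
  set b := 1 - s * q
  have hb0 : 0 ≤ b := sub_nonneg.2 hsq
  have hba : b ≤ a := one_sub_mul_le_one_sub_pow hq1 s
  have hab : a - b ≤ s ^ 2 * q ^ 2 / 2 := by
    linarith [one_sub_pow_le_one_sub_mul_add_sq hq0 hq1 s]
  -- also for `m = 0`, where `m - 1 = 0` in `ℕ`
  have ha : a ^ (m - 1) ≤ 3 * exp (-(q * m)) ^ s := by
    have hm : (m : ℝ) ≤ ((m - 1 : ℕ) : ℝ) + 1 := by exact_mod_cast (by omega : m ≤ m - 1 + 1)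
    calc a ^ (m - 1) = (1 - q) ^ (s * (m - 1)) := by rw [← pow_mul]
      _ ≤ exp (-(q * ((s * (m - 1) : ℕ) : ℝ))) := one_sub_pow_le_exp_neg_mul hq1 _
      _ ≤ exp (q * s) * exp (-(q * m)) ^ s := by
          rw [← exp_nat_mul, ← exp_add]
          gcongr
          push_cast
          nlinarith [mul_nonneg hq0 (Nat.cast_nonneg (α := ℝ) s)]
      _ ≤ 3 * exp (-(q * m)) ^ s := by
          gcongr
          calc exp (q * s) ≤ exp 1 := exp_le_exp.2 (by linarith)
            _ ≤ 3 := by linarith [exp_one_lt_d9]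
  have hdiff := abs_pow_sub_pow_le a b m
  rw [abs_of_nonneg (sub_nonneg.2 (pow_le_pow_left₀ hb0 hba m)), abs_of_nonneg (sub_nonneg.2 hba),
    max_eq_left (by rw [abs_of_nonneg hb0, abs_of_nonneg (hb0.trans hba)]; exact hba),
    abs_of_nonneg (hb0.trans hba)] at hdiff
  calc a ^ m - b ^ m ≤ (a - b) * m * a ^ (m - 1) := hdiff
    _ ≤ s ^ 2 * q ^ 2 / 2 * m * (3 * exp (-(q * m)) ^ s) := by gcongr
    _ = 3 / 2 * m * s ^ 2 * q ^ 2 * exp (-(q * m)) ^ s := by ring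

lemma sum_range_choose_mul_mul_pow (N : ℕ) (x : ℝ) :
    ∑ s ∈ range (N + 1), (N.choose s : ℝ) * s * x ^ s = N * x * (1 + x) ^ (N - 1) := by
  rcases N with _ | M
  · simp
  rw [sum_range_succ', add_comm 1 x, add_pow, mul_sum]
  simp only [Nat.cast_zero, mul_zero, zero_mul, add_zero, one_pow, mul_one, Nat.add_sub_cancel]
  refine sum_congr rfl fun s _ => ?_
  have h := congrArg (Nat.cast : ℕ → ℝ) (Nat.add_one_mul_choose_eq M s)
  push_cast at h ⊢
  linear_combination (x ^ (s + 1)) * h.symm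

lemma sum_range_choose_mul_sq_mul_pow_le {N : ℕ} {x : ℝ} (hx0 : 0 ≤ x) (hx2 : x ≤ 2) :
    3 / 2 * ∑ s ∈ range (N + 1), (N.choose s : ℝ) * s ^ 2 * x ^ s ≤ N ^ 2 * (1 + x) ^ N := by
  rcases N.eq_zero_or_pos with rfl | hN
  · simp
  have hpow : 3 / 2 * x * (1 + x) ^ (N - 1) ≤ (1 + x) ^ N :=
    calc 3 / 2 * x * (1 + x) ^ (N - 1) ≤ (1 + x) * (1 + x) ^ (N - 1) := by gcongr; linarith
      _ = (1 + x) ^ N := by rw [← pow_succ', Nat.sub_add_cancel hN]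
  calc 3 / 2 * ∑ s ∈ range (N + 1), (N.choose s : ℝ) * s ^ 2 * x ^ s
      ≤ 3 / 2 * ∑ s ∈ range (N + 1), N * ((N.choose s : ℝ) * s * x ^ s) := by
        gcongr 3 / 2 * ?_
        refine sum_le_sum fun s hs => ?_
        have hsN : (s : ℝ) ≤ N := by exact_mod_cast Nat.lt_succ_iff.1 (mem_range.1 hs)
        have : (s : ℝ) ^ 2 ≤ N * s := by nlinarith [Nat.cast_nonneg (α := ℝ) s]
        calc (N.choose s : ℝ) * s ^ 2 * x ^ s ≤ N.choose s * (N * s) * x ^ s := by gcongr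
          _ = _ := by ring
    _ = N ^ 2 * (3 / 2 * x * (1 + x) ^ (N - 1)) := by
        rw [← mul_sum, sum_range_choose_mul_mul_pow]; ring
    _ ≤ N ^ 2 * (1 + x) ^ N := by gcongr

lemma le_sum_range_neg_one_pow_mul_choose_mul_one_sub_mul_pow {N m : ℕ} {q : ℝ}
    (hq0 : 0 ≤ q) (hNq : N * q ≤ 1) :
    (1 - exp (-(q * m))) ^ N - q ^ 2 * N ^ 2 * m * (1 + exp (-(q * m))) ^ N
      ≤ ∑ s ∈ range (N + 1), (-1) ^ s * (N.choose s : ℝ) * (1 - s * q) ^ m := by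
  rcases N.eq_zero_or_pos with rfl | hN
  · simp
  have hq1 : q ≤ 1 := le_trans (le_mul_of_one_le_left hq0 (by exact_mod_cast hN)) hNq
  set x := exp (-(q * m))
  set y := (1 - q) ^ m
  have hx1 : x ≤ 1 := exp_le_one_iff.2 (by simp only [neg_nonpos]; positivity)
  have hyx : y ≤ x := by simpa using one_sub_pow_le_exp_neg_mul hq1 m
  have hbinom : ∑ s ∈ range (N + 1), (-1) ^ s * (N.choose s : ℝ) * y ^ s = (1 - y) ^ N := by
    rw [sub_eq_neg_add, add_pow]
    refine sum_congr rfl fun s _ => ?_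
    rw [neg_pow]
    ring
  have herr : ∀ s ∈ range (N + 1), (-1) ^ s * (N.choose s : ℝ) * (y ^ s - (1 - s * q) ^ m)
      ≤ m * q ^ 2 * (3 / 2 * ((N.choose s : ℝ) * s ^ 2 * x ^ s)) := by
    intro s hs
    have hsq : s * q ≤ 1 :=
      le_trans (by gcongr; exact_mod_cast Nat.lt_succ_iff.1 (mem_range.1 hs)) hNq
    have hys : y ^ s = ((1 - q) ^ s) ^ m := by rw [← pow_mul, ← pow_mul, mul_comm]
    have herr0 : 0 ≤ (N.choose s : ℝ) * (y ^ s - (1 - s * q) ^ m) := by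
      rw [hys]
      exact mul_nonneg (Nat.cast_nonneg _) (sub_nonneg.2
        (pow_le_pow_left₀ (sub_nonneg.2 hsq) (one_sub_mul_le_one_sub_pow hq1 s) m))
    calc (-1) ^ s * (N.choose s : ℝ) * (y ^ s - (1 - s * q) ^ m)
        ≤ N.choose s * (y ^ s - (1 - s * q) ^ m) := by
          rw [mul_assoc]
          refine (le_abs_self _).trans ?_
          rw [abs_mul, abs_neg_one_pow, one_mul, abs_of_nonneg herr0]
      _ ≤ N.choose s * (3 / 2 * m * s ^ 2 * q ^ 2 * x ^ s) := by
          rw [hys]; gcongr; exact one_sub_pow_pow_sub_one_sub_mul_pow_le hq0 hsq m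
      _ = _ := by ring
  have hsum := sum_le_sum herr
  rw [← mul_sum, ← mul_sum] at hsum
  have hmoment := mul_le_mul_of_nonneg_left
    (sum_range_choose_mul_sq_mul_pow_le (N := N) (exp_pos _).le (by linarith))
    (by positivity : (0 : ℝ) ≤ m * q ^ 2)
  have hmono : (1 - x) ^ N ≤ (1 - y) ^ N := by gcongr
  calc (1 - x) ^ N - q ^ 2 * N ^ 2 * m * (1 + x) ^ N
      ≤ (1 - y) ^ N
          - ∑ s ∈ range (N + 1), (-1) ^ s * (N.choose s : ℝ) * (y ^ s - (1 - s * q) ^ m) := by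
        linarith
    _ = _ := by
        rw [← hbinom, ← sum_sub_distrib]
        exact sum_congr rfl fun s _ => by ring

section Coupon

variable {α ι : Type*} [Fintype α] [DecidableEq α] [Fintype ι]

lemma sum_prod_filter_forall_not_mem (w : α → ℝ) (U : Finset α) (m : ℕ) :
    ∑ Φ : Fin m → α with ∀ j, Φ j ∉ U, ∏ j, w (Φ j) = (∑ a ∈ Uᶜ, w a) ^ m := by
  have hpi : ({Φ : Fin m → α | ∀ j, Φ j ∉ U} : Finset _) = Fintype.piFinset fun _ => Uᶜ := by
    ext Φ; simp
  rw [hpi, ← prod_univ_sum, prod_const, card_univ, Fintype.card_fin]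

lemma sum_prod_filter_forall_exists_mem (w : α → ℝ) (hw : ∑ a, w a = 1) (B : ι → Finset α)
    (hB : Pairwise (Disjoint on B)) (q : ℝ) (hq : ∀ i, ∑ a ∈ B i, w a = q) (m : ℕ) :
    ∑ Φ : Fin m → α with ∀ i, ∃ j, Φ j ∈ B i, ∏ j, w (Φ j)
      = ∑ s ∈ range (Fintype.card ι + 1),
          (-1) ^ s * ((Fintype.card ι).choose s : ℝ) * (1 - s * q) ^ m := by
  have hcompl : ∀ t : Finset ι, ∑ a ∈ (t.biUnion B)ᶜ, w a = 1 - #t * q := by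
    intro t
    rw [← hw, ← sum_compl_add_sum (t.biUnion B), sum_biUnion (hB.set_pairwise _)]
    simp [hq]
  have hinter : ∀ t : Finset ι,
      t.inf (fun i => ({Φ : Fin m → α | ∀ j, Φ j ∉ B i} : Finset _))
        = ({Φ : Fin m → α | ∀ j, Φ j ∉ t.biUnion B} : Finset _) := by
    intro t; ext Φ; simp only [mem_inf, mem_filter_univ, mem_biUnion]; grind
  have hall : (univ.inf fun i => ({Φ : Fin m → α | ∀ j, Φ j ∉ B i} : Finset _)ᶜ)
      = ({Φ : Fin m → α | ∀ i, ∃ j, Φ j ∈ B i} : Finset _) := by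
    ext Φ; simp [mem_inf]
  rw [← hall, inclusion_exclusion_sum_inf_compl]
  calc _ = ∑ t ∈ (univ : Finset ι).powerset, (-1 : ℝ) ^ #t * (1 - #t * q) ^ m := by
        refine sum_congr rfl fun t _ => ?_
        rw [hinter, sum_prod_filter_forall_not_mem, hcompl, zsmul_eq_mul]
        push_cast
        rfl
    _ = _ := by
        rw [sum_powerset_apply_card (fun s => (-1 : ℝ) ^ s * (1 - s * q) ^ m), card_univ]
        refine sum_congr rfl fun s _ => ?_
        rw [nsmul_eq_mul]
        ring

end Coupon

section Injections

variable {α : Type*} [DecidableEq α]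

lemma image_univ_eq_of_forall_mem {k : ℕ} {f : Fin k → α} (hf : Injective f) {J : Finset α}
    (hJ : #J = k) (hfJ : ∀ i, f i ∈ J) : univ.image f = J := by
  refine eq_of_subset_of_card_le (fun a ha => ?_) ?_
  · obtain ⟨i, -, rfl⟩ := mem_image.1 ha
    exact hfJ i
  · rw [card_image_of_injective _ hf, card_univ, Fintype.card_fin, hJ]

lemma card_filter_injective_forall_mem [Fintype α] {k : ℕ} {J : Finset α} (hJ : #J = k) :
    #{f : Fin k → α | Injective f ∧ ∀ i, f i ∈ J} = k ! := by
  let e : {f : Fin k → α // Injective f ∧ ∀ i, f i ∈ J} ≃ (Fin k ↪ J) :=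
    { toFun := fun f => ⟨fun i => ⟨f.1 i, f.2.2 i⟩, fun _ _ h => f.2.1 (congrArg Subtype.val h)⟩
      invFun := fun g => ⟨fun i => g i, fun _ _ h => g.injective (Subtype.ext h), fun i => (g i).2⟩
      left_inv := fun _ => rfl
      right_inv := fun _ => rfl }
  rw [← Fintype.card_subtype, Fintype.card_congr e, Fintype.card_embedding_eq, Fintype.card_fin,
    Fintype.card_coe, hJ, Nat.descFactorial_self]

lemma sum_filter_injective_prod [Fintype α] (g : α → ℝ) (k : ℕ) :
    ∑ f : Fin k → α with Injective f, ∏ i, g (f i)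
      = k ! * ∑ J ∈ powersetCard k univ, ∏ a ∈ J, g a := by
  have hmaps : ∀ f ∈ ({f : Fin k → α | Injective f} : Finset _),
      univ.image f ∈ powersetCard k univ := fun f hf => mem_powersetCard.2 ⟨subset_univ _, by
        rw [card_image_of_injective _ ((mem_filter_univ f).1 hf), card_univ, Fintype.card_fin]⟩
  rw [← sum_fiberwise_of_maps_to hmaps, mul_sum]
  refine sum_congr rfl fun J hJ => ?_
  have hJk := (mem_powersetCard.1 hJ).2
  have hfiber : ({f : Fin k → α | Injective f} : Finset _).filter (fun f => univ.image f = J)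
      = ({f : Fin k → α | Injective f ∧ ∀ i, f i ∈ J} : Finset _) := by
    ext f
    simp only [mem_filter, mem_univ, true_and]
    constructor
    · rintro ⟨hf, rfl⟩
      exact ⟨hf, fun i => mem_image_of_mem f (mem_univ i)⟩
    · rintro ⟨hf, hfJ⟩
      exact ⟨hf, image_univ_eq_of_forall_mem hf hJk hfJ⟩
  rw [hfiber, sum_congr rfl (g := fun _ => ∏ a ∈ J, g a), sum_const,
    card_filter_injective_forall_mem hJk, nsmul_eq_mul]
  intro f hf
  obtain ⟨hf, hfJ⟩ := (mem_filter_univ f).1 hf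
  rw [← image_univ_eq_of_forall_mem hf hJk hfJ, prod_image fun _ _ _ _ h => hf h]

end Injections

lemma sum_powersetCard_univ_fin_prod (n k : ℕ) (p : ℕ → ℝ) :
    ∑ J ∈ powersetCard k (univ : Finset (Fin n)), ∏ j ∈ J, p j
      = ∑ J ∈ powersetCard k (range n), ∏ j ∈ J, p j := by
  rw [← Nat.Iio_eq_range, ← Fin.map_valEmbedding_univ, powersetCard_map, sum_map]
  exact sum_congr rfl fun J _ => (prod_map J Fin.valEmbedding p).symm

variable {n k : ℕ} {p : ℕ → ℝ}

lemma clauseProbK_nonneg (hp : ∀ i < n, 0 ≤ p i) (c : Fin k → Fin n × Bool) :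
    0 ≤ clauseProbK n k p c := by
  unfold clauseProbK
  split_ifs
  · refine div_nonneg (prod_nonneg fun i _ => hp _ (c i).1.2) (mul_nonneg (by positivity)
      (sum_nonneg fun J hJ => prod_nonneg fun j hj => hp j ?_))
    exact mem_range.1 ((mem_powersetCard.1 hJ).1 hj)
  · exact le_rfl

lemma sum_clauseProbK (hS : ∑ J ∈ powersetCard k (range n), ∏ j ∈ J, p j ≠ 0) :
    ∑ c, clauseProbK n k p c = 1 := by
  set S := ∑ J ∈ powersetCard k (range n), ∏ j ∈ J, p j with hS_def
  have hinj : ∑ f : Fin k → Fin n with Injective f, ∏ i, p (f i) = k ! * S := by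
    rw [hS_def, ← sum_powersetCard_univ_fin_prod]
    exact sum_filter_injective_prod (fun j : Fin n => p j) k
  -- a clause is a pair (variables, signs), and its probability depends only on the variables
  let e := (Equiv.arrowProdEquivProdArrow (Fin k) (fun _ => Fin n) (fun _ => Bool)).symm
  calc ∑ c, clauseProbK n k p c = ∑ x, clauseProbK n k p (e x) := (e.sum_comp _).symm
    _ = ∑ f : Fin k → Fin n, ∑ _b : Fin k → Bool,
          if Injective f then (∏ i, p (f i)) / (2 ^ k * k ! * S) else 0 :=
        Fintype.sum_prod_type _
    _ = 1 := by
        simp only [sum_const, card_univ, Fintype.card_fun, Fintype.card_bool, Fintype.card_fin,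
          nsmul_eq_mul, Nat.cast_pow, Nat.cast_ofNat, ← mul_sum, ← sum_filter, ← sum_div, hinj]
        field_simp

lemma sum_powersetCard_range_prod_pos (hkn : k ≤ n) (hpos : ∀ i < n, 0 < p i) :
    0 < ∑ J ∈ powersetCard k (range n), ∏ j ∈ J, p j := by
  refine sum_pos (fun J hJ => prod_pos fun j hj => hpos j ?_) ⟨range k, ?_⟩
  · exact mem_range.1 ((mem_powersetCard.1 hJ).1 hj)
  · exact mem_powersetCard.2 ⟨range_subset_range.2 hkn, card_range k⟩

lemma qmaxK_nonneg (hkn : k ≤ n) (hp : ∀ i < n, 0 ≤ p i) : 0 ≤ qmaxK n k p :=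
  div_nonneg (prod_nonneg fun j hj => hp j ((mem_range.1 hj).trans_le hkn))
    (mul_nonneg (by positivity) (sum_nonneg fun J hJ => prod_nonneg fun j hj =>
      hp j (mem_range.1 ((mem_powersetCard.1 hJ).1 hj))))

def blockingClause (hkn : k ≤ n) (b : Fin k → Bool) (σ : Equiv.Perm (Fin k)) :
    Fin k → Fin n × Bool :=
  fun i => (Fin.castLE hkn (σ i), b (σ i))

-- The unordered clause on the first `k` variables with sign `b j` on variable `j`, as the set of
-- its `k!` orderings. It is falsified by every assignment that agrees with `!b` there.
def blockingClauses (hkn : k ≤ n) (b : Fin k → Bool) : Finset (Fin k → Fin n × Bool) :=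
  univ.image (blockingClause hkn b)

variable (hkn : k ≤ n)

lemma blockingClause_fst_injective (b : Fin k → Bool) (σ : Equiv.Perm (Fin k)) :
    Injective fun i => (blockingClause hkn b σ i).1 :=
  (Fin.castLE_injective hkn).comp σ.injective

lemma eq_of_blockingClause_eq {b b' : Fin k → Bool} {σ τ : Equiv.Perm (Fin k)}
    (h : blockingClause hkn b σ = blockingClause hkn b' τ) : b = b' ∧ σ = τ := by
  have hστ : σ = τ := Equiv.ext fun i => Fin.castLE_injective hkn (congrArg Prod.fst (congrFun h i))
  subst hστ
  refine ⟨funext fun i => ?_, rfl⟩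
  obtain ⟨j, rfl⟩ := σ.surjective i
  exact congrArg Prod.snd (congrFun h j)

lemma disjoint_blockingClauses {b b' : Fin k → Bool} (hbb' : b ≠ b') :
    Disjoint (blockingClauses hkn b) (blockingClauses hkn b') := by
  simp only [blockingClauses, disjoint_left, mem_image, mem_univ, true_and, not_exists]
  rintro _ ⟨σ, rfl⟩ τ h
  exact hbb' (eq_of_blockingClause_eq hkn h.symm).1

lemma clauseProbK_blockingClause (p : ℕ → ℝ) (b : Fin k → Bool) (σ : Equiv.Perm (Fin k)) :
    clauseProbK n k p (blockingClause hkn b σ)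
      = (∏ j ∈ range k, p j) / (2 ^ k * k ! * ∑ J ∈ powersetCard k (range n), ∏ j ∈ J, p j) := by
  rw [clauseProbK, if_pos (blockingClause_fst_injective hkn b σ), ← Fin.prod_univ_eq_prod_range]
  congr 1
  exact Equiv.prod_comp σ fun i : Fin k => p i

lemma sum_clauseProbK_blockingClauses (p : ℕ → ℝ) (b : Fin k → Bool) :
    ∑ c ∈ blockingClauses hkn b, clauseProbK n k p c = qmaxK n k p := by
  have hfac : (k ! : ℝ) ≠ 0 := by positivity
  rw [blockingClauses, sum_image fun σ _ τ _ h => (eq_of_blockingClause_eq hkn h).2]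
  simp only [clauseProbK_blockingClause, sum_const, card_univ, Fintype.card_perm,
    Fintype.card_fin, nsmul_eq_mul, qmaxK]
  rw [mul_comm (2 ^ k : ℝ), mul_assoc, ← mul_div_assoc, mul_div_mul_left _ _ hfac]

lemma not_satK_of_forall_exists_mem_blockingClauses {m : ℕ} (Φ : Fin m → Fin k → Fin n × Bool)
    (hΦ : ∀ b, ∃ j, Φ j ∈ blockingClauses hkn b) : ¬ SatK Φ := by
  rintro ⟨a, ha⟩
  obtain ⟨j, hj⟩ := hΦ fun i => !a (Fin.castLE hkn i)
  obtain ⟨σ, -, hσ⟩ := mem_image.1 hj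
  obtain ⟨i, hi⟩ := ha j
  rw [← hσ] at hi
  exact Bool.eq_not_self _ |>.mp hi

lemma sum_formulaProbK_le_probUnsatK {m : ℕ} (hp : ∀ i < n, 0 ≤ p i)
    (s : Finset (Fin m → Fin k → Fin n × Bool)) (hs : ∀ Φ ∈ s, ¬ SatK Φ) :
    ∑ Φ ∈ s, formulaProbK n m k p Φ ≤ probUnsatK n m k p := by
  rw [probUnsatK, ← sum_filter]
  exact sum_le_sum_of_subset_of_nonneg (fun Φ hΦ => (mem_filter_univ Φ).2 (hs Φ hΦ))
    fun Φ _ _ => prod_nonneg fun j _ => clauseProbK_nonneg hp (Φ j)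

theorem nonuniform_kSAT_unsat_lower_bound_general
    (n m k : ℕ) (p : ℕ → ℝ) (hkn : k ≤ n)
    (hpos : ∀ i, i < n → 0 < p i)
    (hq : 2 ^ k * qmaxK n k p < 1) :
    (1 - Real.exp (-(qmaxK n k p * m))) ^ (2 ^ k) -
        qmaxK n k p ^ 2 * (2 : ℝ) ^ (2 * k) * m *
          (1 + Real.exp (-(qmaxK n k p * m))) ^ (2 ^ k)
      ≤ probUnsatK n m k p := by
  have hp : ∀ i < n, 0 ≤ p i := fun i hi => (hpos i hi).le
  have hS := sum_powersetCard_range_prod_pos hkn hpos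
  have hcard : Fintype.card (Fin k → Bool) = 2 ^ k := by simp
  calc _ = (1 - exp (-(qmaxK n k p * m))) ^ (2 ^ k) - qmaxK n k p ^ 2 * ((2 ^ k : ℕ) : ℝ) ^ 2 * m *
          (1 + exp (-(qmaxK n k p * m))) ^ (2 ^ k) := by push_cast; ring
    _ ≤ ∑ s ∈ range (2 ^ k + 1),
          (-1) ^ s * ((2 ^ k).choose s : ℝ) * (1 - s * qmaxK n k p) ^ m :=
        le_sum_range_neg_one_pow_mul_choose_mul_one_sub_mul_pow (qmaxK_nonneg hkn hp)
          (by push_cast; exact hq.le)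
    _ = ∑ Φ : Fin m → Fin k → Fin n × Bool with ∀ b, ∃ j, Φ j ∈ blockingClauses hkn b,
          formulaProbK n m k p Φ := by
        have hcoupon := sum_prod_filter_forall_exists_mem _ (sum_clauseProbK hS.ne') _
          (fun _ _ => disjoint_blockingClauses hkn) _ (sum_clauseProbK_blockingClauses hkn p) m
        rw [hcard] at hcoupon
        exact hcoupon.symm
    _ ≤ probUnsatK n m k p :=
        sum_formulaProbK_le_probUnsatK hp _ fun Φ hΦ =>
          not_satK_of_forall_exists_mem_blockingClauses hkn Φ ((mem_filter_univ Φ).1 hΦ)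

/-- Lower bound on the probability that a non-uniform random k-SAT formula is unsatisfiable:
`Pr(Φ unsat) ≥ (1 - e^{-q_max·m})^{2^k} - q_max²·2^{2k}·m·(1 + e^{-q_max·m})^{2^k}`. -/
theorem nonuniform_kSAT_unsat_lower_bound
    (n m k : ℕ) (p : ℕ → ℝ) (hk : 2 ≤ k) (hkn : k ≤ n)
    (hsum : ∑ i ∈ Finset.range n, p i = 1)
    (hmono : ∀ i j, i ≤ j → j < n → p j ≤ p i)
    (hpos : ∀ i, i < n → 0 < p i)
    (hq : 2 ^ k * qmaxK n k p < 1) :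
    (1 - Real.exp (-(qmaxK n k p * m))) ^ (2 ^ k) -
        qmaxK n k p ^ 2 * (2 : ℝ) ^ (2 * k) * m *
          (1 + Real.exp (-(qmaxK n k p * m))) ^ (2 ^ k)
      ≤ probUnsatK n m k p :=
  nonuniform_kSAT_unsat_lower_bound_general n m k p hkn hpos hq
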